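/- Let z be the element of the plactic monoid M represented by the word cba, and let π : M →* M' be the natural quotient homomorphism onto M' := M/(cba = 1). Then π restricts to a bijection from the set M \ Mz = {v ∈ M | v is not of the form m * z for any m ∈ M} onto M': for every element m' ∈ M' there exists a unique v ∈ M with v ∉ {m * z | m ∈ M} and π v = m'. -/

import Mathlib

/-! The word `z = cba` is central in `M` and right cancellable, and right multiplication by `z`
increases a natural-number invariant. Centrality makes "`x z^i = y z^j` for some `i, j`" a
congruence containing `(z, 1)`, so elements with the same image in `M'` satisfy such an equation;
cancellation forces two of them lying outside `Mz` to be equal, and the invariant lets one strip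
factors `z` off any element until what is left lies outside `Mz`.

Cancellation and the invariant come from Schensted insertion: a tableau over `a < b < c` is
given by six exponents, inserting words respects the Knuth relations, the reading word of the
insertion tableau of `m` represents `m`, and inserting `cba` adds a full column. -/

namespace Plactic

/-- The generator `a`. -/
def a : FreeMonoid (Fin 3) := FreeMonoid.of 0
/-- The generator `b`. -/
def b : FreeMonoid (Fin 3) := FreeMonoid.of 1
/-- The generator `c`. -/
def c : FreeMonoid (Fin 3) := FreeMonoid.of 2

/-- The eight Knuth relations on three generators. -/
inductive KnuthRel : FreeMonoid (Fin 3) → FreeMonoid (Fin 3) → Prop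
  | aba : KnuthRel (a * b * a) (b * a * a)
  | bab : KnuthRel (b * a * b) (b * b * a)
  | aca : KnuthRel (a * c * a) (c * a * a)
  | cac : KnuthRel (c * a * c) (c * c * a)
  | cbb : KnuthRel (c * b * b) (b * c * b)
  | cbc : KnuthRel (c * b * c) (c * c * b)
  | bac : KnuthRel (b * a * c) (b * c * a)
  | acb : KnuthRel (a * c * b) (c * a * b)

/-- The plactic congruence: the congruence generated by the Knuth relations. -/
def placticCon : Con (FreeMonoid (Fin 3)) := conGen KnuthRel

/-- The plactic monoid with three generators. -/
abbrev M := placticCon.Quotient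

/-- The natural projection from the free monoid onto the plactic monoid. -/
def mk : FreeMonoid (Fin 3) →* M := placticCon.mk'

/-- The congruence on `M` generated by the pair `(ac, ca)`. -/
def con1 : Con M := conGen (fun x y => x = mk (a * c) ∧ y = mk (c * a))

/-- `N1 = M/(ac = ca)`. -/
abbrev N1 := con1.Quotient

/-- The congruence on `M` generated by the pair `(bacb, cbab)`. -/
def con2 : Con M := conGen (fun x y => x = mk (b * a * c * b) ∧ y = mk (c * b * a * b))

/-- The grammic monoid `N2 = M/(bacb = cbab)`. -/
abbrev N2 := con2.Quotient


/-- The congruence on `M` generated by the pair `(cba, 1)`. -/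
def conM' : Con M := conGen (fun x y => x = mk (c * b * a) ∧ y = 1)

/-- `M' = M/(cba = 1)`. -/
abbrev M' := conM'.Quotient

end Plactic

section CentralQuotient

variable {M : Type*} [Monoid M] {z : M}

def centralPowCon (hz : ∀ m, Commute m z) : Con M where
  r x y := ∃ i j : ℕ, x * z ^ i = y * z ^ j
  iseqv := by
    refine ⟨fun x => ⟨0, 0, rfl⟩, fun ⟨i, j, h⟩ => ⟨j, i, h.symm⟩, ?_⟩
    rintro x y w ⟨i, j, hxy⟩ ⟨k, l, hyw⟩
    refine ⟨i + k, l + j, ?_⟩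
    calc x * z ^ (i + k) = y * z ^ k * z ^ j := by
          rw [pow_add, ← mul_assoc, hxy, mul_assoc, mul_assoc, ← pow_add, ← pow_add, add_comm]
      _ = w * z ^ (l + j) := by rw [hyw, mul_assoc, pow_add]
  mul' := by
    rintro x₁ x₂ y₁ y₂ ⟨i, j, hx⟩ ⟨k, l, hy⟩
    have split (x y : M) (i k : ℕ) : x * y * z ^ (i + k) = x * z ^ i * (y * z ^ k) := by
      rw [pow_add, mul_assoc x, ← mul_assoc y, ((hz y).pow_right i).eq]
      simp only [mul_assoc]
    exact ⟨i + k, j + l, by rw [split, split, hx, hy]⟩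

lemma conGen_le_centralPowCon (hz : ∀ m, Commute m z) :
    conGen (fun x y => x = z ∧ y = 1) ≤ centralPowCon hz :=
  Con.conGen_le.2 fun _ _ ⟨hx, hy⟩ =>
    ⟨0, 1, by rw [hx, hy, pow_zero, pow_one, mul_one, one_mul]⟩

lemma exists_eq_mul_pow_of_lt (ν : M → ℕ) (hν : ∀ m, ν m < ν (m * z)) (m : M) :
    ∃ v : M, (¬ ∃ n, v = n * z) ∧ ∃ k : ℕ, m = v * z ^ k := by
  by_cases hm : ∃ n, m = n * z
  · obtain ⟨n, rfl⟩ := hm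
    have := hν n
    obtain ⟨v, hv, k, rfl⟩ := exists_eq_mul_pow_of_lt ν hν n
    exact ⟨v, hv, k + 1, by rw [pow_succ, mul_assoc]⟩
  · exact ⟨m, hm, 0, by rw [pow_zero, mul_one]⟩
termination_by ν m

lemma eq_of_mul_pow_eq_mul_pow (hz : IsRightRegular z) {v w : M} (hv : ¬ ∃ n, v = n * z)
    (hw : ¬ ∃ n, w = n * z) {i j : ℕ} (h : v * z ^ i = w * z ^ j) : v = w := by
  wlog hij : i ≤ j generalizing v w i j
  · exact (this hw hv h.symm (by omega)).symm
  obtain ⟨d, rfl⟩ := Nat.exists_eq_add_of_le hij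
  have hvw : v = w * z ^ d := hz.pow i <| by
    simp only [mul_assoc, ← pow_add, add_comm d, h]
  cases d with
  | zero => simpa using hvw
  | succ d => exact absurd ⟨w * z ^ d, by rw [hvw, pow_succ, mul_assoc]⟩ hv

theorem existsUnique_not_mul_mk_eq_of_central (hcomm : ∀ m, Commute m z)
    (hreg : IsRightRegular z) (ν : M → ℕ) (hν : ∀ m, ν m < ν (m * z))
    (m' : (conGen (fun x y => x = z ∧ y = 1)).Quotient) :
    ∃! v : M, (¬ ∃ m, v = m * z) ∧ (conGen (fun x y => x = z ∧ y = 1)).mk' v = m' := by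
  obtain ⟨m, rfl⟩ := Con.mk'_surjective m'
  obtain ⟨v, hv, k, rfl⟩ := exists_eq_mul_pow_of_lt ν hν m
  have hz : (conGen (fun x y => x = z ∧ y = 1)).mk' z = 1 :=
    Con.eq _ |>.2 <| .of _ _ ⟨rfl, rfl⟩
  refine ⟨v, ⟨hv, by rw [map_mul, map_pow, hz, one_pow, mul_one]⟩, ?_⟩
  rintro w ⟨hw, hwv⟩
  obtain ⟨i, j, h⟩ := conGen_le_centralPowCon hcomm <| by
    rw [← Con.mk'_ker (conGen _)]; exact hwv
  exact eq_of_mul_pow_eq_mul_pow hreg hw hv (h.trans (by rw [mul_assoc, ← pow_add]))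

end CentralQuotient

namespace Plactic

-- Rows `a^p b^q c^r`, `b^s c^t` and `c^u`, from top to bottom.
structure Tableau where
  p : ℕ
  q : ℕ
  r : ℕ
  s : ℕ
  t : ℕ
  u : ℕ

namespace Tableau

-- Schensted row insertion: the letter bumps the leftmost strictly larger letter of a row
-- into the row below.
def insertLetter : Tableau → Fin 3 → Tableau
  | ⟨p, 0, 0, s, t, u⟩, 0 => ⟨p + 1, 0, 0, s, t, u⟩
  | ⟨p, 0, r + 1, s, t, u⟩, 0 => ⟨p + 1, 0, r, s, t + 1, u⟩
  | ⟨p, q + 1, r, s, 0, u⟩, 0 => ⟨p + 1, q, r, s + 1, 0, u⟩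
  | ⟨p, q + 1, r, s, t + 1, u⟩, 0 => ⟨p + 1, q, r, s + 1, t, u + 1⟩
  | ⟨p, q, 0, s, t, u⟩, 1 => ⟨p, q + 1, 0, s, t, u⟩
  | ⟨p, q, r + 1, s, t, u⟩, 1 => ⟨p, q + 1, r, s, t + 1, u⟩
  | ⟨p, q, r, s, t, u⟩, 2 => ⟨p, q, r + 1, s, t, u⟩

def insertWord (T : Tableau) (w : FreeMonoid (Fin 3)) : Tableau :=
  w.toList.foldl insertLetter T

@[simp] lemma insertWord_one (T : Tableau) : T.insertWord 1 = T := rfl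

@[simp] lemma insertWord_of (T : Tableau) (x : Fin 3) :
    T.insertWord (.of x) = T.insertLetter x := rfl

lemma insertWord_mul (T : Tableau) (v w : FreeMonoid (Fin 3)) :
    T.insertWord (v * w) = (T.insertWord v).insertWord w := by
  simp [insertWord, FreeMonoid.toList_mul, List.foldl_append]

lemma insertWord_eq_of_knuthRel {v w : FreeMonoid (Fin 3)} (h : KnuthRel v w) (T : Tableau) :
    T.insertWord v = T.insertWord w := by
  obtain ⟨p, q, r, s, t, u⟩ := T
  cases h <;> simp only [a, b, c, insertWord_mul, insertWord_of] <;>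
    rcases q with _ | _ | q <;> rcases r with _ | _ | r <;> rcases t with _ | _ | t <;> rfl

lemma insertWord_eq_of_placticCon {v w : FreeMonoid (Fin 3)} (h : placticCon v w) (T : Tableau) :
    T.insertWord v = T.insertWord w := by
  induction h generalizing T with
  | of _ _ h => exact insertWord_eq_of_knuthRel h T
  | refl => rfl
  | symm _ ih => exact (ih T).symm
  | trans _ _ ih₁ ih₂ => exact (ih₁ T).trans (ih₂ T)
  | mul _ _ ih₁ ih₂ => rw [insertWord_mul, insertWord_mul, ih₁, ih₂]

def addColumn (T : Tableau) : Tableau := ⟨T.p + 1, T.q, T.r, T.s + 1, T.t, T.u + 1⟩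

lemma addColumn_injective : Function.Injective addColumn := by
  rintro ⟨p, q, r, s, t, u⟩ ⟨p', q', r', s', t', u'⟩ h
  simp_all [addColumn]

lemma insertWord_cba (T : Tableau) : T.insertWord (c * b * a) = T.addColumn := by
  simp [a, b, c, insertWord_mul, addColumn, insertLetter]

end Tableau

def A : M := mk a
def B : M := mk b
def C : M := mk c

lemma mk_eq_of_knuthRel {v w : FreeMonoid (Fin 3)} (h : KnuthRel v w) : mk v = mk w :=
  Quot.sound (ConGen.Rel.of _ _ h)

lemma commute_CB_B : Commute (C * B) B := by
  simpa [Commute, SemiconjBy, A, B, C, mul_assoc] using mk_eq_of_knuthRel .cbb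
lemma commute_CB_C : Commute (C * B) C := by
  simpa [Commute, SemiconjBy, A, B, C, mul_assoc] using mk_eq_of_knuthRel .cbc
lemma commute_CA_A : Commute (C * A) A := by
  simpa [Commute, SemiconjBy, A, B, C, mul_assoc] using (mk_eq_of_knuthRel .aca).symm
lemma commute_CA_C : Commute (C * A) C := by
  simpa [Commute, SemiconjBy, A, B, C, mul_assoc] using mk_eq_of_knuthRel .cac
lemma commute_BA_A : Commute (B * A) A := by
  simpa [Commute, SemiconjBy, A, B, C, mul_assoc] using (mk_eq_of_knuthRel .aba).symm
lemma commute_BA_B : Commute (B * A) B := by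
  simpa [Commute, SemiconjBy, A, B, C, mul_assoc] using mk_eq_of_knuthRel .bab
lemma BCA_eq_BAC : B * C * A = B * A * C := by
  simpa [A, B, C] using (mk_eq_of_knuthRel .bac).symm
lemma ACB_eq_CAB : A * C * B = C * A * B := by
  simpa [A, B, C] using mk_eq_of_knuthRel .acb

-- Row insertion as identities `row * x = y * row'`, where `y` is the bumped letter.
lemma B_pow_mul_C_pow_succ_mul_B (q r : ℕ) :
    B ^ q * C ^ (r + 1) * B = C * (B ^ (q + 1) * C ^ r) :=
  calc B ^ q * C ^ (r + 1) * B = B ^ q * (C * B * C ^ r) := by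
        rw [(commute_CB_C.pow_right r).eq, pow_succ]; simp only [mul_assoc]
    _ = C * B * B ^ q * C ^ r := by rw [← mul_assoc, ← (commute_CB_B.pow_right q).eq]
    _ = C * (B ^ (q + 1) * C ^ r) := by rw [pow_succ']; simp only [mul_assoc]

lemma A_pow_mul_C_mul_B (p : ℕ) : A ^ p * C * B = C * A ^ p * B := by
  cases p with
  | zero => simp
  | succ p =>
    calc A ^ (p + 1) * C * B = A ^ p * (C * A) * B := by
          rw [pow_succ, mul_assoc (A ^ p), mul_assoc (A ^ p), ACB_eq_CAB]
          simp only [mul_assoc]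
      _ = C * A ^ (p + 1) * B := by
          rw [← (commute_CA_A.pow_right p).eq, pow_succ']; simp only [mul_assoc]

lemma A_pow_mul_B_pow_mul_C_pow_succ_mul_B (p q r : ℕ) :
    A ^ p * B ^ q * C ^ (r + 1) * B = C * (A ^ p * B ^ (q + 1) * C ^ r) :=
  calc A ^ p * B ^ q * C ^ (r + 1) * B = A ^ p * C * B * (B ^ q * C ^ r) := by
        rw [mul_assoc (A ^ p), mul_assoc (A ^ p), B_pow_mul_C_pow_succ_mul_B, pow_succ']
        simp only [mul_assoc]
    _ = C * (A ^ p * B ^ (q + 1) * C ^ r) := by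
        rw [A_pow_mul_C_mul_B, pow_succ']; simp only [mul_assoc]

lemma A_pow_mul_C_pow_succ_mul_A (p r : ℕ) :
    A ^ p * C ^ (r + 1) * A = C * (A ^ (p + 1) * C ^ r) :=
  calc A ^ p * C ^ (r + 1) * A = A ^ p * (C * A) * C ^ r := by
        rw [pow_succ, mul_assoc (A ^ p), mul_assoc, ← (commute_CA_C.pow_right r).eq]
        simp only [mul_assoc]
    _ = C * (A ^ (p + 1) * C ^ r) := by
        rw [← (commute_CA_A.pow_right p).eq, pow_succ']; simp only [mul_assoc]

lemma B_pow_succ_mul_C_pow_mul_A (q r : ℕ) :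
    B ^ (q + 1) * C ^ r * A = B * A * (B ^ q * C ^ r) := by
  cases r with
  | zero => simp [pow_succ, mul_assoc, (commute_BA_B.pow_right q).eq]
  | succ r =>
    calc B ^ (q + 1) * C ^ (r + 1) * A = B ^ q * B * (C ^ r * (C * A)) := by
          rw [pow_succ, pow_succ]; simp only [mul_assoc]
      _ = B ^ q * (B * C * A) * C ^ r := by
          rw [← (commute_CA_C.pow_right r).eq]; simp only [mul_assoc]
      _ = B * A * (B ^ q * C ^ (r + 1)) := by
          rw [BCA_eq_BAC, ← mul_assoc, ← (commute_BA_B.pow_right q).eq, pow_succ']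
          simp only [mul_assoc]

lemma A_pow_mul_B_pow_succ_mul_C_pow_mul_A (p q r : ℕ) :
    A ^ p * B ^ (q + 1) * C ^ r * A = B * (A ^ (p + 1) * B ^ q * C ^ r) :=
  calc A ^ p * B ^ (q + 1) * C ^ r * A = A ^ p * (B * A) * (B ^ q * C ^ r) := by
        rw [mul_assoc (A ^ p), mul_assoc (A ^ p), B_pow_succ_mul_C_pow_mul_A]
        simp only [mul_assoc]
    _ = B * (A ^ (p + 1) * B ^ q * C ^ r) := by
        rw [← (commute_BA_A.pow_right p).eq, pow_succ']; simp only [mul_assoc]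

namespace Tableau

def read (T : Tableau) : M := C ^ T.u * (B ^ T.s * C ^ T.t) * (A ^ T.p * B ^ T.q * C ^ T.r)

def empty : Tableau := ⟨0, 0, 0, 0, 0, 0⟩

lemma read_empty : empty.read = 1 := by simp [empty, read]

lemma read_insertLetter_zero (T : Tableau) : (T.insertLetter 0).read = T.read * A := by
  obtain ⟨p, q, r, s, t, u⟩ := T
  rcases q with _ | q
  · rcases r with _ | r
    · simp [insertLetter, read, pow_succ, mul_assoc]
    · simp only [insertLetter, read, pow_zero, mul_one]
      rw [mul_assoc _ _ A, A_pow_mul_C_pow_succ_mul_A, pow_succ C t]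
      simp only [mul_assoc]
  · rcases t with _ | t
    · simp only [insertLetter, read]
      rw [mul_assoc _ _ A, A_pow_mul_B_pow_succ_mul_C_pow_mul_A]
      simp [pow_succ, mul_assoc]
    · simp only [insertLetter, read]
      rw [mul_assoc _ _ A, A_pow_mul_B_pow_succ_mul_C_pow_mul_A, ← mul_assoc _ B,
        mul_assoc (C ^ u), B_pow_mul_C_pow_succ_mul_B, pow_succ C u]
      simp only [mul_assoc]

lemma read_insertLetter_one (T : Tableau) : (T.insertLetter 1).read = T.read * B := by
  obtain ⟨p, q, r, s, t, u⟩ := T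
  rcases r with _ | r
  · simp [insertLetter, read, pow_succ, mul_assoc]
  · simp only [insertLetter, read]
    rw [mul_assoc _ _ B, A_pow_mul_B_pow_mul_C_pow_succ_mul_B, pow_succ C t]
    simp only [mul_assoc]

lemma read_insertLetter_two (T : Tableau) : (T.insertLetter 2).read = T.read * C := by
  simp [insertLetter, read, pow_succ, mul_assoc]

lemma read_insertLetter (T : Tableau) (x : Fin 3) :
    (T.insertLetter x).read = T.read * Plactic.mk (.of x) :=
  match x with
  | 0 => T.read_insertLetter_zero
  | 1 => T.read_insertLetter_one
  | 2 => T.read_insertLetter_two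

lemma read_insertWord (T : Tableau) (w : FreeMonoid (Fin 3)) :
    (T.insertWord w).read = T.read * Plactic.mk w := by
  induction w using FreeMonoid.inductionOn' generalizing T with
  | one => simp
  | of_mul x w ih => rw [insertWord_mul, ih, insertWord_of, read_insertLetter, map_mul, mul_assoc]

end Tableau

def insertionTableau (m : M) : Tableau :=
  Con.liftOn m Tableau.empty.insertWord fun _ _ h => Tableau.insertWord_eq_of_placticCon h _

lemma insertionTableau_mul_mk (m : M) (w : FreeMonoid (Fin 3)) :
    insertionTableau (m * mk w) = (insertionTableau m).insertWord w := by
  induction m using Con.induction_on with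
  | H v => exact Tableau.insertWord_mul _ v w

lemma read_insertionTableau (m : M) : (insertionTableau m).read = m := by
  induction m using Con.induction_on with
  | H w =>
    change (Tableau.empty.insertWord w).read = mk w
    rw [Tableau.read_insertWord, Tableau.read_empty, one_mul]

lemma insertionTableau_injective : Function.Injective insertionTableau :=
  Function.LeftInverse.injective read_insertionTableau

lemma insertionTableau_mul_cba (m : M) :
    insertionTableau (m * mk (c * b * a)) = (insertionTableau m).addColumn := by
  rw [insertionTableau_mul_mk, Tableau.insertWord_cba]

lemma isRightRegular_cba : IsRightRegular (mk (c * b * a)) := fun x y h =>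
  insertionTableau_injective <| Tableau.addColumn_injective <| by
    simpa only [insertionTableau_mul_cba] using congrArg insertionTableau h

lemma mk_cba : mk (c * b * a) = C * B * A := by simp only [map_mul]; rfl

lemma commute_A_cba : Commute A (mk (c * b * a)) :=
  calc A * mk (c * b * a) = C * (A * (B * A)) := by
        rw [mk_cba, ← mul_assoc, ← mul_assoc, ACB_eq_CAB]; simp only [mul_assoc]
    _ = mk (c * b * a) * A := by rw [← commute_BA_A.eq, mk_cba]; simp only [mul_assoc]

lemma commute_B_cba : Commute B (mk (c * b * a)) :=
  calc B * mk (c * b * a) = C * (B * (B * A)) := by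
        rw [mk_cba, ← mul_assoc, ← commute_CB_B.eq]; simp only [mul_assoc]
    _ = mk (c * b * a) * B := by rw [← commute_BA_B.eq, mk_cba]; simp only [mul_assoc]

lemma commute_C_cba : Commute C (mk (c * b * a)) :=
  calc C * mk (c * b * a) = C * (B * C * A) := by
        rw [mk_cba, ← mul_assoc, ← commute_CB_C.eq]; simp only [mul_assoc]
    _ = mk (c * b * a) * C := by rw [BCA_eq_BAC, mk_cba]; simp only [mul_assoc]

lemma commute_cba (m : M) : Commute m (mk (c * b * a)) := by
  induction m using Con.induction_on with
  | H w =>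
    induction w using FreeMonoid.inductionOn' with
    | one => exact Commute.one_left _
    | of_mul x w ih =>
      have hx : Commute (mk (.of x)) (mk (c * b * a)) :=
        match x with
        | 0 => commute_A_cba
        | 1 => commute_B_cba
        | 2 => commute_C_cba
      exact (map_mul mk _ _).symm ▸ hx.mul_left ih

/-- The quotient projection `π : M →* M'` restricts to a bijection from
`M \ M·z` (elements not of the form `m * z`, where `z = cba`) onto `M'`:
every element of `M'` has a unique preimage outside `M·z`. -/
theorem quotient_bijection_off_Mz :
    ∀ m' : M', ∃! v : M,
      (¬ ∃ m : M, v = m * mk (c * b * a)) ∧ conM'.mk' v = m' :=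
  existsUnique_not_mul_mk_eq_of_central commute_cba isRightRegular_cba
    (fun m => (insertionTableau m).u) fun m => by
      rw [insertionTableau_mul_cba]; exact Nat.lt_succ_self _

end Plactic
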